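/- arXiv:1509.05696 — 4 statements merged into one kernel-verified Lean document; each statement's English description precedes it below -/
import Mathlib

section
/- (Theorem 2, Property 3: Laplace Principle) If α₁ ≠ 0, then the transient signal x satisfies lim_{t → ∞} −(1/t) · log|x(t)| = λ₁ (in particular, x(t) ≠ 0 for all sufficiently large t, so the logarithm is eventually well defined). -/
open Filter Real Topology

/-!
Factoring out the slowest mode, `x t * exp (lam 0 * t) = ∑ a n * exp (-(lam n - lam 0) * t)`.
Every term with `n ≠ 0` decays and all are dominated by `|a n|`, so by Tannery's theorem this
tends to `a 0 ≠ 0`. Hence `log |x t| = -lam 0 * t + O(1)`, which gives the limit after dividing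
by `-t`.
-/

theorem tendsto_tsum_mul_exp_neg_mul_atTop {β : Type*} (a : β → ℝ) (μ : β → ℝ) (i₀ : β)
    (ha : Summable fun i => |a i|) (hμ₀ : μ i₀ = 0) (hμ : ∀ i ≠ i₀, 0 < μ i) :
    Tendsto (fun t => ∑' i, a i * exp (-μ i * t)) atTop (𝓝 (a i₀)) := by
  classical
  have hterm : ∀ i, Tendsto (fun t => a i * exp (-μ i * t)) atTop
      (𝓝 (if i = i₀ then a i₀ else 0)) := by
    intro i
    split_ifs with hi
    · subst hi
      simp [hμ₀]
    · simpa using (tendsto_exp_atBot.comp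
        (tendsto_id.const_mul_atTop_of_neg (neg_neg_of_pos (hμ i hi)))).const_mul (a i)
  have hbound : ∀ᶠ t in atTop, ∀ i, ‖a i * exp (-μ i * t)‖ ≤ |a i| := by
    filter_upwards [eventually_ge_atTop 0] with t ht i
    have hμi : 0 ≤ μ i := by
      rcases eq_or_ne i i₀ with rfl | hi
      exacts [hμ₀.ge, (hμ i hi).le]
    rw [norm_mul, norm_eq_abs, norm_of_nonneg (exp_pos _).le]
    exact mul_le_of_le_one_right (abs_nonneg _) (exp_le_one_iff.mpr (by nlinarith))
  simpa using tendsto_tsum_of_dominated_convergence ha hterm hbound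

theorem tendsto_neg_inv_mul_log_abs_of_tendsto_mul_exp {f : ℝ → ℝ} {c L : ℝ} (hL : L ≠ 0)
    (hf : Tendsto (fun t => f t * exp (c * t)) atTop (𝓝 L)) :
    (∀ᶠ t in atTop, f t ≠ 0) ∧ Tendsto (fun t => -(1 / t) * log |f t|) atTop (𝓝 c) := by
  have hne : ∀ᶠ t in atTop, f t * exp (c * t) ≠ 0 := hf.eventually_ne hL
  refine ⟨hne.mono fun t ht hft => ht (by rw [hft, zero_mul]), ?_⟩
  have hlog : Tendsto (fun t => log |f t * exp (c * t)|) atTop (𝓝 (log |L|)) :=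
    (continuousAt_log (abs_ne_zero.mpr hL)).tendsto.comp hf.abs
  have hvanish : Tendsto (fun t => (1 / t) * log |f t * exp (c * t)|) atTop (𝓝 0) := by
    simpa using (tendsto_inv_atTop_zero.mul hlog)
  have hmain : Tendsto (fun t => c - (1 / t) * log |f t * exp (c * t)|) atTop (𝓝 c) := by
    simpa using hvanish.const_sub c
  refine hmain.congr' ?_
  filter_upwards [hne, eventually_gt_atTop 0] with t ht htpos
  have hft : f t ≠ 0 := left_ne_zero_of_mul ht
  rw [abs_mul, abs_exp, log_mul (abs_ne_zero.mpr hft) (exp_ne_zero _), log_exp]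
  field_simp
  ring

theorem transient_signal_laplace_principle_general
    (lam : ℕ → ℝ) (hlam_mono : StrictMono lam)
    (a : ℕ → ℝ) (ha : Summable fun n => |a n|)
    (x : ℝ → ℝ)
    (hx : ∀ t ≥ (0 : ℝ), x t = ∑' n, a n * Real.exp (-lam n * t))
    (ha0 : a 0 ≠ 0) :
    (∀ᶠ t in atTop, x t ≠ 0) ∧
    Tendsto (fun t => -(1 / t) * Real.log |x t|) atTop (nhds (lam 0)) := by
  have hshifted := tendsto_tsum_mul_exp_neg_mul_atTop a (fun n => lam n - lam 0) 0 ha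
    (sub_self _) fun n hn => sub_pos.mpr (hlam_mono (Nat.pos_of_ne_zero hn))
  refine tendsto_neg_inv_mul_log_abs_of_tendsto_mul_exp ha0 (hshifted.congr' ?_)
  filter_upwards [eventually_ge_atTop 0] with t ht
  rw [hx t ht, ← tsum_mul_right]
  congr 1 with n
  rw [mul_assoc, ← exp_add]
  ring_nf

/-- Theorem 2, Property 3: Laplace Principle: if `α₁ ≠ 0`, then
`lim_{t → ∞} −(1/t) log|x(t)| = λ₁`; in particular `x(t) ≠ 0` for all sufficiently
large `t`, so the logarithm is eventually well defined. -/
theorem transient_signal_laplace_principle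
    (lam : ℕ → ℝ) (hlam_pos : ∀ n, 0 < lam n) (hlam_mono : StrictMono lam)
    (a : ℕ → ℝ) (ha : Summable fun n => |a n|)
    (x : ℝ → ℝ)
    (hx : ∀ t ≥ (0 : ℝ), x t = ∑' n, a n * Real.exp (-lam n * t))
    (ha0 : a 0 ≠ 0) :
    (∀ᶠ t in atTop, x t ≠ 0) ∧
    Tendsto (fun t => -(1 / t) * Real.log |x t|) atTop (nhds (lam 0)) :=
  transient_signal_laplace_principle_general lam hlam_mono a ha x hx ha0
end

section
/- Generalized coefficient isolation (correctness of step 2 of the decomposition algorithm at stage k): for every k ∈ ℕ, the k-th residual x_k(t) := x(t) − ∑_{j=1}^{k−1} α_j e^{-λ_j t} satisfies lim_{t → ∞} e^{λ_k t} · x_k(t) = α_k. -/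
/-! Multiplying the `k`-th residual by `e^{λ_k t}` leaves the series
`∑ₙ α_{n+k} e^{(λ_k - λ_{n+k}) t}`, whose exponents are `0` for `n = 0` and negative otherwise.
For `t ≥ 0` every term is dominated by `|α_{n+k}|`, so by dominated convergence for series
(Tannery's theorem) the sum tends to the limit of its first term, `α_k`. -/

open Filter Real Topology

section ExponentialSeries

variable {a μ : ℕ → ℝ}

lemma abs_mul_exp_le_abs {c s t : ℝ} (hs : s ≤ 0) (ht : 0 ≤ t) : |c * exp (s * t)| ≤ |c| := by
  rw [abs_mul, abs_exp]
  exact mul_le_of_le_one_right (abs_nonneg c)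
    (exp_le_one_iff.mpr (mul_nonpos_of_nonpos_of_nonneg hs ht))

lemma summable_mul_exp_of_nonpos (ha : Summable fun n => |a n|) (hμ : ∀ n, μ n ≤ 0)
    {t : ℝ} (ht : 0 ≤ t) : Summable fun n => a n * exp (μ n * t) :=
  .of_norm_bounded ha fun n => abs_mul_exp_le_abs (hμ n) ht

lemma tendsto_tsum_mul_exp_atTop (ha : Summable fun n => |a n|) (hμ₀ : μ 0 = 0)
    (hμ : ∀ n, μ (n + 1) < 0) :
    Tendsto (fun t => ∑' n, a n * exp (μ n * t)) atTop (𝓝 (a 0)) := by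
  have hμ_nonpos : ∀ n, μ n ≤ 0 := fun
    | 0 => hμ₀.le
    | n + 1 => (hμ n).le
  have h_term : ∀ n, Tendsto (fun t => a n * exp (μ n * t)) atTop
      (𝓝 (if n = 0 then a 0 else 0)) := fun
    | 0 => by simp [hμ₀]
    | n + 1 => by
      simpa using (tendsto_exp_atBot.comp
        (tendsto_id.const_mul_atTop_of_neg (hμ n))).const_mul (a (n + 1))
  have h := tendsto_tsum_of_dominated_convergence ha h_term
    (eventually_ge_atTop 0 |>.mono fun t ht n => abs_mul_exp_le_abs (hμ_nonpos n) ht)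
  simpa using h

end ExponentialSeries

lemma exp_mul_tsum_sub_sum_range {a lam : ℕ → ℝ} (ha : Summable fun n => |a n|)
    (hlam : Monotone lam) (k : ℕ) {t : ℝ} (ht : 0 ≤ t) :
    exp (lam k * t) * (∑' n, a n * exp (-lam n * t) -
        ∑ j ∈ Finset.range k, a j * exp (-lam j * t)) =
      ∑' n, a (n + k) * exp ((lam k - lam (n + k)) * t) := by
  have h_split (n : ℕ) : a (n + k) * exp (-lam (n + k) * t) =
      exp (-lam k * t) * (a (n + k) * exp ((lam k - lam (n + k)) * t)) := by
    rw [mul_left_comm, ← exp_add]; ring_nf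
  have h_tail : Summable fun n => a (n + k) * exp (-lam (n + k) * t) := by
    simp only [h_split]
    exact (summable_mul_exp_of_nonpos ((summable_nat_add_iff k).mpr ha)
      (fun n => sub_nonpos.mpr (hlam (Nat.le_add_left k n))) ht).mul_left _
  have h_full : Summable fun n => a n * exp (-lam n * t) :=
    (summable_nat_add_iff (f := fun n => a n * exp (-lam n * t)) k).mp h_tail
  rw [← h_full.sum_add_tsum_nat_add k, add_sub_cancel_left, ← tsum_mul_left]
  congr 1 with n
  rw [h_split, ← mul_assoc, ← exp_add, neg_mul, add_neg_cancel, exp_zero, one_mul]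

theorem transient_signal_generalized_isolation_general
    (lam : ℕ → ℝ) (hlam_mono : StrictMono lam)
    (a : ℕ → ℝ) (ha : Summable fun n => |a n|)
    (x : ℝ → ℝ)
    (hx : ∀ t ≥ (0 : ℝ), x t = ∑' n, a n * Real.exp (-lam n * t)) :
    ∀ k : ℕ,
      Tendsto
        (fun t => Real.exp (lam k * t) *
          (x t - ∑ j ∈ Finset.range k, a j * Real.exp (-lam j * t)))
        atTop (nhds (a k)) := by
  intro k
  have h_lim := tendsto_tsum_mul_exp_atTop (a := fun n => a (n + k))
    (μ := fun n => lam k - lam (n + k)) ((summable_nat_add_iff k).mpr ha) (by simp)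
    (fun n => sub_neg.mpr (hlam_mono (by omega)))
  refine (h_lim.congr' ?_).trans (by simp)
  filter_upwards [eventually_ge_atTop 0] with t ht
  rw [hx t ht, exp_mul_tsum_sub_sum_range ha hlam_mono.monotone k ht]

/-- Generalized coefficient isolation at stage `k`: the `k`-th residual
`x_k(t) = x(t) − ∑_{j<k} α_j e^{-λ_j t}` satisfies `lim_{t → ∞} e^{λ_k t} x_k(t) = α_k`. -/
theorem transient_signal_generalized_isolation
    (lam : ℕ → ℝ) (hlam_pos : ∀ n, 0 < lam n) (hlam_mono : StrictMono lam)
    (a : ℕ → ℝ) (ha : Summable fun n => |a n|)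
    (x : ℝ → ℝ)
    (hx : ∀ t ≥ (0 : ℝ), x t = ∑' n, a n * Real.exp (-lam n * t)) :
    ∀ k : ℕ,
      Tendsto
        (fun t => Real.exp (lam k * t) *
          (x t - ∑ j ∈ Finset.range k, a j * Real.exp (-lam j * t)))
        atTop (nhds (a k)) :=
  transient_signal_generalized_isolation_general lam hlam_mono a ha x hx
end

section
/- Generalized Laplace principle (correctness of step 1 of the decomposition algorithm at stage k): for every k ∈ ℕ with α_k ≠ 0, the k-th residual x_k(t) := x(t) − ∑_{j=1}^{k−1} α_j e^{-λ_j t} satisfies lim_{t → ∞} −(1/t) · log|x_k(t)| = λ_k. -/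
open Filter Real Topology

/-!
Splitting off the first `k + 1` terms, the `k`-th residual is
`e^{-λ_k t} (α_k + ∑_{n > k} α_n e^{-(λ_n - λ_k) t})`. The exponents `λ_n - λ_k` are positive,
so by dominated convergence the bracket tends to `α_k ≠ 0`; its logarithm therefore stays bounded
and disappears after division by `t`, leaving `λ_k`.
-/

lemma summable_mul_exp_neg_mul {b μ : ℕ → ℝ} {m t : ℝ} (hb : Summable fun n => |b n|)
    (hμ : ∀ n, m ≤ μ n) (ht : 0 ≤ t) : Summable fun n => b n * exp (-μ n * t) := by
  refine Summable.of_norm_bounded (hb.mul_right (exp (-m * t))) fun n => ?_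
  rw [norm_mul, norm_of_nonneg (exp_pos _).le, norm_eq_abs]
  gcongr
  nlinarith [hμ n]

lemma tendsto_tsum_mul_exp_neg_mul_atTop_zero {b μ : ℕ → ℝ} (hb : Summable fun n => |b n|)
    (hμ : ∀ n, 0 < μ n) : Tendsto (fun t => ∑' n, b n * exp (-μ n * t)) atTop (𝓝 0) := by
  have hterm : ∀ n, Tendsto (fun t => b n * exp (-μ n * t)) atTop (𝓝 0) := fun n => by
    simpa using (tendsto_exp_atBot.comp
      (tendsto_id.const_mul_atTop_of_neg (neg_lt_zero.2 (hμ n)))).const_mul (b n)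
  have hbound : ∀ᶠ t in atTop, ∀ n, ‖b n * exp (-μ n * t)‖ ≤ |b n| := by
    filter_upwards [eventually_ge_atTop 0] with t ht n
    rw [norm_mul, norm_of_nonneg (exp_pos _).le, norm_eq_abs]
    exact mul_le_of_le_one_right (abs_nonneg _)
      (exp_le_one_iff.2 (by nlinarith [hμ n]))
  simpa using tendsto_tsum_of_dominated_convergence hb hterm hbound

lemma tsum_sub_sum_range_mul_exp_neg_mul {a μ : ℕ → ℝ} {t : ℝ}
    (h : Summable fun n => a n * exp (-μ n * t)) (k : ℕ) :
    ∑' n, a n * exp (-μ n * t) - ∑ j ∈ Finset.range k, a j * exp (-μ j * t) =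
      exp (-μ k * t) * (a k + ∑' n, a (n + (k + 1)) * exp (-(μ (n + (k + 1)) - μ k) * t)) := by
  have hfactor : ∀ n, a (n + (k + 1)) * exp (-μ (n + (k + 1)) * t) =
      exp (-μ k * t) * (a (n + (k + 1)) * exp (-(μ (n + (k + 1)) - μ k) * t)) := fun n => by
    rw [mul_left_comm, ← exp_add]
    ring_nf
  rw [← h.sum_add_tsum_nat_add (k + 1), Finset.sum_range_succ, tsum_congr hfactor,
    tsum_mul_left]
  ring

lemma tendsto_neg_one_div_mul_log_abs_of_eventuallyEq_exp_mul {f g : ℝ → ℝ} {c L : ℝ}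
    (hfg : ∀ᶠ t in atTop, f t = exp (-c * t) * g t) (hg : Tendsto g atTop (𝓝 L))
    (hL : L ≠ 0) :
    Tendsto (fun t => -(1 / t) * log |f t|) atTop (𝓝 c) := by
  have hlog : Tendsto (fun t => log |g t|) atTop (𝓝 (log |L|)) :=
    ((continuousAt_log (abs_ne_zero.2 hL)).comp continuous_abs.continuousAt).tendsto.comp hg
  have hlim : Tendsto (fun t => c - log |g t| * t⁻¹) atTop (𝓝 c) := by
    simpa using tendsto_const_nhds.sub (hlog.mul tendsto_inv_atTop_zero)
  refine hlim.congr' ?_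
  filter_upwards [hfg, hg.eventually_ne hL, eventually_gt_atTop 0] with t hft hgt ht
  rw [hft, abs_mul, abs_of_pos (exp_pos _), log_mul (exp_ne_zero _) (abs_ne_zero.2 hgt), log_exp]
  field_simp
  ring

theorem transient_signal_generalized_laplace_principle_general
    (lam : ℕ → ℝ) (hlam_mono : StrictMono lam)
    (a : ℕ → ℝ) (ha : Summable fun n => |a n|)
    (x : ℝ → ℝ)
    (hx : ∀ t ≥ (0 : ℝ), x t = ∑' n, a n * Real.exp (-lam n * t)) :
    ∀ k : ℕ, a k ≠ 0 →
      Tendsto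
        (fun t => -(1 / t) * Real.log
          |x t - ∑ j ∈ Finset.range k, a j * Real.exp (-lam j * t)|)
        atTop (nhds (lam k)) := by
  intro k hak
  have hresidual : ∀ᶠ t in atTop, x t - ∑ j ∈ Finset.range k, a j * exp (-lam j * t) =
      exp (-lam k * t) *
        (a k + ∑' n, a (n + (k + 1)) * exp (-(lam (n + (k + 1)) - lam k) * t)) := by
    filter_upwards [eventually_ge_atTop 0] with t ht
    rw [hx t ht]
    exact tsum_sub_sum_range_mul_exp_neg_mul
      (summable_mul_exp_neg_mul ha (fun n => hlam_mono.monotone n.zero_le) ht) k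
  have htail := tendsto_tsum_mul_exp_neg_mul_atTop_zero
    (μ := fun n => lam (n + (k + 1)) - lam k)
    ((summable_nat_add_iff (f := fun n => |a n|) (k + 1)).2 ha)
    fun n => sub_pos.2 (hlam_mono (by omega))
  exact tendsto_neg_one_div_mul_log_abs_of_eventuallyEq_exp_mul hresidual
    (by simpa using htail.const_add (a k)) hak

/-- Generalized Laplace principle at stage `k`: if `α_k ≠ 0`, then the
`k`-th residual `x_k(t) = x(t) − ∑_{j<k} α_j e^{-λ_j t}` satisfies
`lim_{t → ∞} −(1/t) log|x_k(t)| = λ_k`. -/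
theorem transient_signal_generalized_laplace_principle
    (lam : ℕ → ℝ) (hlam_pos : ∀ n, 0 < lam n) (hlam_mono : StrictMono lam)
    (a : ℕ → ℝ) (ha : Summable fun n => |a n|)
    (x : ℝ → ℝ)
    (hx : ∀ t ≥ (0 : ℝ), x t = ∑' n, a n * Real.exp (-lam n * t)) :
    ∀ k : ℕ, a k ≠ 0 →
      Tendsto
        (fun t => -(1 / t) * Real.log
          |x t - ∑ j ∈ Finset.range k, a j * Real.exp (-lam j * t)|)
        atTop (nhds (lam k)) :=
  transient_signal_generalized_laplace_principle_general lam hlam_mono a ha x hx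
end

section
/- (Theorem 1, Property 2, proper containment) If λ > 0 and λ ≠ λₙ for every n ∈ ℕ, then the decaying exponential t ↦ e^{-λ t} is not a transient signal with decay rates λ₁ < λ₂ < ⋯: there is no coefficient sequence α : ℕ → ℝ with ∑ₙ |αₙ| < ∞ such that e^{-λ t} = ∑ₙ αₙ e^{-λₙ t} for all t ≥ 0. -/
/-!
Multiply a representation `∑ aₙ e^{-λₙ t}` by `e^{c t}` and let `t → ∞`: if no coefficient with
`λₙ < c` survives, dominated convergence leaves exactly the coefficient of rate `c`. For
`e^{-μ t}` the left side becomes `e^{(c - μ) t}`, so taking `c = λ₀, λ₁, …` below `μ` in turn kills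
every coefficient with `λₙ < μ`; then `c = μ` gives the limit `1` on one side and, as `μ` is not a
rate, `0` on the other.
-/

open Filter Real Topology

lemma tendsto_exp_mul_atTop_nhds_zero {d : ℝ} (hd : d < 0) :
    Tendsto (fun t => exp (d * t)) atTop (𝓝 0) :=
  tendsto_exp_atBot.comp (tendsto_id.const_mul_atTop_of_neg hd)

lemma tendsto_exp_mul_tsum_mul_exp {lam : ℕ → ℝ} {a : ℕ → ℝ} {c : ℝ}
    (ha : Summable fun n => |a n|) (hlow : ∀ n, lam n < c → a n = 0) :
    Tendsto (fun t => exp (c * t) * ∑' n, a n * exp (-lam n * t)) atTop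
      (𝓝 (∑' n, if lam n = c then a n else 0)) := by
  have hshift (t : ℝ) : exp (c * t) * ∑' n, a n * exp (-lam n * t) =
      ∑' n, a n * exp ((c - lam n) * t) := by
    rw [← tsum_mul_left]
    congr 1 with n
    rw [mul_left_comm, ← exp_add]
    ring_nf
  simp only [hshift]
  refine tendsto_tsum_of_dominated_convergence ha (fun n => ?_) ?_
  · rcases lt_trichotomy (lam n) c with h | h | h
    · simp [hlow n h, h.ne]
    · simp [h]
    · simpa [h.ne'] using (tendsto_exp_mul_atTop_nhds_zero (sub_neg.2 h)).const_mul (a n)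
  · filter_upwards [eventually_ge_atTop 0] with t ht n
    rcases lt_or_ge (lam n) c with h | h
    · simp [hlow n h]
    · rw [norm_mul, norm_eq_abs, norm_of_nonneg (exp_nonneg _)]
      exact mul_le_of_le_one_right (abs_nonneg _)
        (exp_le_one_iff.2 (mul_nonpos_of_nonpos_of_nonneg (sub_nonpos.2 h) ht))

theorem decaying_exponential_not_transient_general
    (lam : ℕ → ℝ) (hlam_mono : StrictMono lam)
    (μ : ℝ) (hμne : ∀ n, μ ≠ lam n) :
    ¬ ∃ a : ℕ → ℝ, (Summable fun n => |a n|) ∧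
      ∀ t ≥ (0 : ℝ), Real.exp (-μ * t) = ∑' n, a n * Real.exp (-lam n * t) := by
  rintro ⟨a, ha, hrep⟩
  have hlim (c : ℝ) (hlow : ∀ n, lam n < c → a n = 0) :
      Tendsto (fun t => exp ((c - μ) * t)) atTop (𝓝 (∑' n, if lam n = c then a n else 0)) := by
    refine (tendsto_exp_mul_tsum_mul_exp ha hlow).congr' ?_
    filter_upwards [eventually_ge_atTop 0] with t ht
    rw [← hrep t ht, ← exp_add]
    ring_nf
  have hbelow : ∀ m, lam m < μ → a m = 0 := by
    intro m
    induction m using Nat.strong_induction_on with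
    | _ m ih =>
      intro hm
      have hprev : ∀ n, lam n < lam m → a n = 0 := fun n hn =>
        ih n (hlam_mono.lt_iff_lt.1 hn) (hn.trans hm)
      have hcoef : (∑' n, if lam n = lam m then a n else 0) = a m := by
        simp_rw [hlam_mono.injective.eq_iff]
        exact tsum_ite_eq m a
      exact hcoef ▸ tendsto_nhds_unique (hlim _ hprev)
        (tendsto_exp_mul_atTop_nhds_zero (sub_neg.2 hm))
  have hcoef_μ : (∑' n, if lam n = μ then a n else 0) = 0 := by
    simp [fun n => (hμne n).symm]
  have hlim_μ := hlim μ hbelow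
  simp only [sub_self, zero_mul, exp_zero, hcoef_μ] at hlim_μ
  exact one_ne_zero (tendsto_nhds_unique tendsto_const_nhds hlim_μ)

/-- Theorem 1, Property 2, proper containment: if `μ > 0` and
`μ ≠ λₙ` for every `n`, then `t ↦ e^{-μ t}` is not a transient signal with decay
rates `λ₁ < λ₂ < ⋯`. -/
theorem decaying_exponential_not_transient
    (lam : ℕ → ℝ) (hlam_pos : ∀ n, 0 < lam n) (hlam_mono : StrictMono lam)
    (μ : ℝ) (hμ : 0 < μ) (hμne : ∀ n, μ ≠ lam n) :
    ¬ ∃ a : ℕ → ℝ, (Summable fun n => |a n|) ∧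
      ∀ t ≥ (0 : ℝ), Real.exp (-μ * t) = ∑' n, a n * Real.exp (-lam n * t) :=
  decaying_exponential_not_transient_general lam hlam_mono μ hμne
end
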